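/- Let h be a hyperexponential term given in standard form h = c0·exp(a/b)·∏_{ℓ=1}^L c_ℓ^{e_ℓ} with deg_x a > deg_x b, and let r ≥ i ≥ 0 be integers. Then there exists a polynomial N_{r,i} ∈ K[x,y] with (D_x^i h)·c0·(b·b*·∏_{ℓ=1}^L c_ℓ)^r = N_{r,i}·h in E, satisfying deg_x N_{r,i} = deg_x c0 + r·α + i·β, deg_y N_{r,i} ≤ deg_y c0 + r·γ, and lc_x N_{r,i} = (lc_x c0)·(lc_x a)^i·(lc_x b)^{r−i}·(lc_x b*)^r·(lc_x(∏_{ℓ=1}^L c_ℓ))^r·(deg_x a − deg_x b)^i, where the integer deg_x a − deg_x b is interpreted as an element of K. -/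

import Mathlib

/-!
Put `X = b b* ∏ c_ℓ`. Every prime factor of `b` divides `b*`, so `b ∣ b' b*`, say `b w = b' b*`,
and then `D_x h / h = c0'/c0 + T/X` with the polynomial `T = (a' b* - a w) ∏ c_ℓ + b b* s`, where
`s` is the numerator of `Σ e_ℓ c_ℓ'/c_ℓ`. Since `b T = (b a' - b' a) b* ∏ c_ℓ + b² b* s`, the
Wronskian term dominates: `T` has degree `deg a - 1 + deg b* + deg ∏ c_ℓ` and leading coefficient
`(deg a - deg b) lc a lc b* lc ∏ c_ℓ`, and in particular `deg X ≤ deg T`.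

Differentiating `D_x^k h = M_k h / (c0 X^k)` gives `M_{k+1} = M_k' X + M_k (T - k X')`, in which
`M_k T` has strictly the largest degree. Hence degree and leading coefficient of `M_k` grow by
those of `T` at each step, and `N = M_i X^(r-i)`. The `y`-degree bounds are read off the same
recursion, the `y`-degree being additive on products (it is the `x`-degree after swapping the
variables).
-/

open Polynomial Finset

/-- The derivative with respect to `y` on `K[y][x]`
(we represent bivariate polynomials as `Polynomial (Polynomial K)`,
the *outer* variable being `x`, the *inner* variable being `y`). -/
noncomputable def DY {K : Type*} [CommRing K] (p : Polynomial (Polynomial K)) :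
    Polynomial (Polynomial K) :=
  p.sum fun n a => Polynomial.C (Polynomial.derivative a) * Polynomial.X ^ n

/-- The degree with respect to `y` of an element of `K[y][x]`. -/
noncomputable def degY {K : Type*} [CommRing K] (p : Polynomial (Polynomial K)) : ℕ :=
  p.support.sup fun n => (p.coeff n).natDegree

/-- The embedding of `K[x]` into `K[y][x]` (polynomials free of `y`). -/
noncomputable def liftX {K : Type*} [CommRing K] (p : Polynomial K) :
    Polynomial (Polynomial K) :=
  p.map (Polynomial.C : K →+* Polynomial K)

/-- The falling factorial `z(z-1)⋯(z-n+1)` of an element of `K`. -/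
noncomputable def ffall {K : Type*} [Field K] (z : K) (n : ℕ) : K :=
  ∏ j ∈ Finset.range n, (z - (j : K))

section DegY

variable {K : Type*} [CommRing K]

theorem coeff_coeff_swap (p : K[X][X]) (i j : ℕ) :
    ((Bivariate.swap p).coeff j).coeff i = (p.coeff i).coeff j := by
  induction p using Polynomial.induction_on' with
  | add p q hp hq => simp [hp, hq]
  | monomial n f =>
    rw [Bivariate.swap_monomial, coeff_mul_C, coeff_map, coeff_C_mul, coeff_X_pow, coeff_monomial]
    split_ifs <;> simp_all

theorem degY_le_iff {p : K[X][X]} {d : ℕ} : degY p ≤ d ↔ ∀ n, (p.coeff n).natDegree ≤ d := by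
  refine ⟨fun h n => ?_, fun h => Finset.sup_le fun n _ => h n⟩
  by_cases hn : p.coeff n = 0
  · simp [hn]
  · exact (Finset.le_sup (f := fun n => (p.coeff n).natDegree) (mem_support_iff.2 hn)).trans h

theorem degY_eq_natDegree_swap (p : K[X][X]) : degY p = (Bivariate.swap p).natDegree := by
  refine le_antisymm (degY_le_iff.2 fun n => natDegree_le_iff_coeff_eq_zero.2 fun j hj => ?_)
    (natDegree_le_iff_coeff_eq_zero.2 fun j hj => Polynomial.ext fun n => ?_)
  · rw [← coeff_coeff_swap, coeff_eq_zero_of_natDegree_lt hj, coeff_zero]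
  · rw [coeff_coeff_swap, coeff_zero]
    exact coeff_eq_zero_of_natDegree_lt ((degY_le_iff.1 le_rfl n).trans_lt hj)

theorem degY_add_le (p q : K[X][X]) : degY (p + q) ≤ max (degY p) (degY q) := by
  simpa only [degY_eq_natDegree_swap, map_add] using natDegree_add_le _ _

theorem degY_sub_le (p q : K[X][X]) : degY (p - q) ≤ max (degY p) (degY q) := by
  simpa only [degY_eq_natDegree_swap, map_sub] using natDegree_sub_le _ _

theorem degY_mul_le (p q : K[X][X]) : degY (p * q) ≤ degY p + degY q := by
  simpa only [degY_eq_natDegree_swap, map_mul] using natDegree_mul_le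

theorem degY_pow_le (p : K[X][X]) (n : ℕ) : degY (p ^ n) ≤ n * degY p := by
  simpa only [degY_eq_natDegree_swap, map_pow] using natDegree_pow_le

theorem degY_smul_le (e : K) (p : K[X][X]) : degY (e • p) ≤ degY p := by
  simpa only [degY_eq_natDegree_swap, map_smul] using natDegree_smul_le _ _

theorem degY_natCast_mul_le (n : ℕ) (p : K[X][X]) : degY ((n : K[X][X]) * p) ≤ degY p := by
  simpa only [degY_eq_natDegree_swap, map_mul, map_natCast, natDegree_natCast, zero_add] using
    natDegree_mul_le (p := (n : K[X][X]))

theorem degY_prod_le {ι : Type*} (s : Finset ι) (f : ι → K[X][X]) :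
    degY (∏ i ∈ s, f i) ≤ ∑ i ∈ s, degY (f i) := by
  simpa only [degY_eq_natDegree_swap, map_prod] using natDegree_prod_le _ _

theorem degY_sum_le {ι : Type*} (s : Finset ι) (f : ι → K[X][X]) {d : ℕ}
    (hf : ∀ i ∈ s, degY (f i) ≤ d) : degY (∑ i ∈ s, f i) ≤ d := by
  simp only [degY_eq_natDegree_swap, map_sum] at hf ⊢
  exact natDegree_sum_le_of_forall_le _ _ hf

theorem degY_mul [IsDomain K] {p q : K[X][X]} (hp : p ≠ 0) (hq : q ≠ 0) :
    degY (p * q) = degY p + degY q := by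
  simp only [degY_eq_natDegree_swap, map_mul]
  exact natDegree_mul ((map_ne_zero_iff _ Bivariate.swap.injective).2 hp)
    ((map_ne_zero_iff _ Bivariate.swap.injective).2 hq)

theorem degY_derivative_le (p : K[X][X]) : degY (derivative p) ≤ degY p := by
  refine degY_le_iff.2 fun n => ?_
  rw [coeff_derivative, ← Nat.cast_succ]
  exact natDegree_mul_le.trans (by rw [natDegree_natCast, add_zero]; exact degY_le_iff.1 le_rfl _)

end DegY

theorem dvd_derivative_mul_of_prime_dvd {R : Type*} [CommRing R]
    [UniqueFactorizationMonoid R] {b bs : R[X]} (h : ∀ q : R[X], Prime q → q ∣ b → q ∣ bs) :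
    b ∣ derivative b * bs := by
  induction b using UniqueFactorizationMonoid.induction_on_prime with
  | h₁ => simp
  | h₂ u hu => exact hu.dvd
  | h₃ a p _ hp ih =>
    obtain ⟨s, hs⟩ := h p hp (dvd_mul_right p a)
    obtain ⟨t, ht⟩ := ih fun q hq hqa => h q hq (hqa.mul_left p)
    exact ⟨derivative p * s + t, by
      rw [derivative_mul]; linear_combination derivative p * a * hs + p * ht⟩

section Degrees

variable {R : Type*} [CommRing R]

theorem coeff_X_mul_derivative (p : R[X]) (n : ℕ) : (X * derivative p).coeff n = n * p.coeff n := by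
  cases n with
  | zero => simp
  | succ n => rw [coeff_X_mul, coeff_derivative]; push_cast; ring

theorem natDegree_X_mul_derivative_le (p : R[X]) : (X * derivative p).natDegree ≤ p.natDegree :=
  natDegree_le_iff_coeff_eq_zero.2 fun n hn => by
    rw [coeff_X_mul_derivative, coeff_eq_zero_of_natDegree_lt hn, mul_zero]

theorem derivative_pow_mul_self (p : R[X]) (n : ℕ) :
    derivative (p ^ n) * p = n * p ^ n * derivative p := by
  cases n with
  | zero => simp
  | succ n => rw [derivative_pow_succ, map_add, map_natCast, map_one]; push_cast; ring

theorem mul_map_eq_of_mul_map_sq_eq {E : Type*} [CommRing E] [IsDomain E] (ι : R[X] →+* E)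
    {a b bs w c0 P s : R[X]} (hb : ι b ≠ 0) (hw : b * w = derivative b * bs) {y h : E}
    (hy : y * ι (c0 * b ^ 2 * P) = h * ι (derivative c0 * b ^ 2 * P
      + (derivative a * b - a * derivative b) * c0 * P + c0 * b ^ 2 * s)) :
    y * ι (c0 * (b * bs * P))
      = h * ι (derivative c0 * (b * bs * P)
          + c0 * ((derivative a * bs - a * w) * P + b * bs * s)) := by
  refine mul_left_cancel₀ hb ?_
  have hwι := congrArg ι hw
  simp only [map_mul, map_add, map_sub, map_pow] at hwι hy ⊢
  linear_combination ι bs * hy + h * ι c0 * ι a * ι P * hwι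

variable [IsDomain R]

theorem degree_sum_smul_derivative_mul_prod_erase_lt {ι S : Type*} [Fintype ι] [DecidableEq ι]
    [SMulZeroClass S R] (e : ι → S) {c : ι → R[X]} (hc : ∀ ℓ, c ℓ ≠ 0) :
    (∑ ℓ, e ℓ • (derivative (c ℓ) * ∏ j ∈ univ.erase ℓ, c j)).degree < (∏ ℓ, c ℓ).degree := by
  have hP : (∏ ℓ, c ℓ).degree ≠ ⊥ := degree_ne_bot.2 (prod_ne_zero_iff.2 fun ℓ _ => hc ℓ)
  refine (degree_sum_le _ _).trans_lt ((Finset.sup_lt_iff (bot_lt_iff_ne_bot.2 hP)).2 fun ℓ _ => ?_)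
  rw [← mul_prod_erase univ c (mem_univ ℓ)]
  refine (degree_smul_le _ _).trans_lt ?_
  rw [degree_mul, degree_mul]
  exact WithBot.add_lt_add_right (degree_ne_bot.2 (prod_ne_zero_iff.2 fun j _ => hc j))
    (degree_derivative_lt (hc ℓ))

variable [CharZero R]

theorem natDegree_wronskian {a b : R[X]} (ha : a ≠ 0) (hb : b ≠ 0)
    (hab : a.natDegree ≠ b.natDegree) :
    (wronskian a b).natDegree + 1 = a.natDegree + b.natDegree ∧
      (wronskian a b).leadingCoeff
        = ((b.natDegree : R) - a.natDegree) * a.leadingCoeff * b.leadingCoeff := by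
  -- multiplying by `X` turns `natDegree - 1` into an index without truncated subtraction
  set W := X * wronskian a b
  have hW_eq : W = a * (X * derivative b) - (X * derivative a) * b := by
    simp only [W, wronskian]; ring
  have hcoeff : W.coeff (a.natDegree + b.natDegree)
      = ((b.natDegree : R) - a.natDegree) * a.leadingCoeff * b.leadingCoeff := by
    rw [hW_eq, coeff_sub,
      coeff_mul_add_eq_of_natDegree_le le_rfl (natDegree_X_mul_derivative_le b),
      coeff_mul_add_eq_of_natDegree_le (natDegree_X_mul_derivative_le a) le_rfl,
      coeff_X_mul_derivative, coeff_X_mul_derivative, coeff_natDegree, coeff_natDegree]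
    ring
  have hne : ((b.natDegree : R) - a.natDegree) * a.leadingCoeff * b.leadingCoeff ≠ 0 :=
    mul_ne_zero (mul_ne_zero (sub_ne_zero.2 (Nat.cast_injective.ne hab.symm))
      (leadingCoeff_ne_zero.2 ha)) (leadingCoeff_ne_zero.2 hb)
  have hdeg : W.natDegree = a.natDegree + b.natDegree := by
    refine le_antisymm ?_ (le_natDegree_of_ne_zero (hcoeff ▸ hne))
    rw [hW_eq]
    exact (natDegree_sub_le _ _).trans (max_le
      (natDegree_mul_le.trans (add_le_add le_rfl (natDegree_X_mul_derivative_le b)))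
      (natDegree_mul_le.trans (add_le_add (natDegree_X_mul_derivative_le a) le_rfl)))
  have hW : wronskian a b ≠ 0 := by
    rintro h0
    rw [show W = 0 by simp [W, h0], coeff_zero] at hcoeff
    exact hne hcoeff.symm
  refine ⟨(natDegree_X_mul hW).symm.trans hdeg, ?_⟩
  rw [← hcoeff, ← hdeg, coeff_natDegree, leadingCoeff_mul, leadingCoeff_X, one_mul]

theorem natDegree_derivative_mul_sub_mul {a b bs w : R[X]} (ha : a ≠ 0) (hb : b ≠ 0)
    (hbs : bs ≠ 0) (hdeg : b.natDegree < a.natDegree) (hw : b * w = derivative b * bs) :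
    (derivative a * bs - a * w).natDegree + 1 = a.natDegree + bs.natDegree ∧
      (derivative a * bs - a * w).leadingCoeff
        = ((a.natDegree : R) - b.natDegree) * a.leadingCoeff * bs.leadingCoeff := by
  set U := derivative a * bs - a * w
  have hU : b * U = wronskian b a * bs := by
    simp only [U, wronskian]; linear_combination (-a) * hw
  obtain ⟨hWdeg, hWlc⟩ := natDegree_wronskian hb ha hdeg.ne
  have hW0 : wronskian b a ≠ 0 := fun h0 => by
    simp [h0, sub_eq_zero, ha, hb, hdeg.ne'] at hWlc
  have hU0 : U ≠ 0 := right_ne_zero_of_mul (hU ▸ mul_ne_zero hW0 hbs)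
  have hdegU := congrArg natDegree hU
  have hlcU := congrArg leadingCoeff hU
  rw [natDegree_mul hb hU0, natDegree_mul hW0 hbs] at hdegU
  rw [leadingCoeff_mul, leadingCoeff_mul, hWlc] at hlcU
  exact ⟨by omega, mul_left_cancel₀ (leadingCoeff_ne_zero.2 hb) (by rw [hlcU]; ring)⟩

theorem natDegree_derivative_mul_sub_mul_mul_add {a b bs w P s : R[X]} (ha : a ≠ 0) (hb : b ≠ 0)
    (hbs : bs ≠ 0) (hP : P ≠ 0) (hdeg : b.natDegree < a.natDegree)
    (hw : b * w = derivative b * bs) (hs : s.degree < P.degree) :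
    (b * bs * P).degree ≤ ((derivative a * bs - a * w) * P + b * bs * s).degree ∧
      ((derivative a * bs - a * w) * P + b * bs * s).natDegree + 1
        = a.natDegree + bs.natDegree + P.natDegree ∧
      ((derivative a * bs - a * w) * P + b * bs * s).leadingCoeff
        = ((a.natDegree : R) - b.natDegree) * a.leadingCoeff * bs.leadingCoeff
          * P.leadingCoeff := by
  obtain ⟨hUdeg, hUlc⟩ := natDegree_derivative_mul_sub_mul ha hb hbs hdeg hw
  set U := derivative a * bs - a * w
  have hU0 : U ≠ 0 := fun h0 => by
    simp [h0, sub_eq_zero, ha, hbs, hdeg.ne'] at hUlc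
  have hbbs : b * bs ≠ 0 := mul_ne_zero hb hbs
  have hle : (b * bs * P).degree ≤ (U * P).degree := by
    rw [degree_eq_natDegree (mul_ne_zero hbbs hP), degree_eq_natDegree (mul_ne_zero hU0 hP),
      natDegree_mul hbbs hP, natDegree_mul hb hbs, natDegree_mul hU0 hP, Nat.cast_le]
    omega
  have hlt : (b * bs * s).degree < (U * P).degree := calc
    (b * bs * s).degree = (b * bs).degree + s.degree := degree_mul
    _ < (b * bs).degree + P.degree := WithBot.add_lt_add_left (degree_ne_bot.2 hbbs) hs
    _ = (b * bs * P).degree := degree_mul.symm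
    _ ≤ (U * P).degree := hle
  rw [degree_add_eq_left_of_degree_lt hlt, natDegree_add_eq_left_of_degree_lt hlt,
    leadingCoeff_add_of_degree_lt' hlt, natDegree_mul hU0 hP, leadingCoeff_mul, hUlc]
  exact ⟨hle, by omega, rfl⟩

end Degrees

section DerivNumerator

variable {R : Type*} [CommRing R]

noncomputable def derivNumerator (c0 X T : R[X]) : ℕ → R[X]
  | 0 => c0
  | k + 1 => derivative (derivNumerator c0 X T k) * X
      + derivNumerator c0 X T k * (T - k * derivative X)

theorem iterate_mul_eq_derivNumerator_mul {E : Type*} [CommRing E] [IsDomain E] (D : E → E)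
    (hD : ∀ u v : E, D (u * v) = D u * v + u * D v) (ι : R[X] →+* E)
    (hι : ∀ q : R[X], D (ι q) = ι (derivative q)) {c0 X T : R[X]} (hc0 : ι c0 ≠ 0) {h : E}
    (hh : D h * ι (c0 * X) = h * ι (derivative c0 * X + c0 * T)) (k : ℕ) :
    D^[k] h * ι (c0 * X ^ k) = ι (derivNumerator c0 X T k) * h := by
  induction k with
  | zero => simp [derivNumerator, mul_comm]
  | succ k ih =>
    have hdiff := congrArg D ih
    rw [hD, hD, hι, hι, derivative_mul] at hdiff
    have hpow := congrArg ι (derivative_pow_mul_self X k)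
    rw [Function.iterate_succ_apply']
    refine mul_left_cancel₀ hc0 ?_
    simp only [derivNumerator, map_mul, map_add, map_sub, map_pow, map_natCast]
      at hdiff hpow hh ih ⊢
    linear_combination ι c0 * ι X * hdiff
      - (ι (derivative c0) * ι X + ι c0 * k * ι (derivative X)) * ih
      + ι (derivNumerator c0 X T k) * hh - ι c0 ^ 2 * D^[k] h * hpow

variable [IsDomain R]

theorem degree_derivative_mul_sub_lt {m X T : R[X]} (hm : m ≠ 0) (hX : X ≠ 0)
    (hXT : X.degree ≤ T.degree) (k : ℕ) :
    (derivative m * X - m * (k * derivative X)).degree < (m * T).degree := by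
  have hXbot : X.degree ≠ ⊥ := degree_ne_bot.2 hX
  rw [degree_mul]
  refine (degree_sub_le _ _).trans_lt (max_lt ?_ ?_) <;> rw [degree_mul]
  · exact WithBot.add_lt_add_of_lt_of_le hXbot (degree_derivative_lt hm) hXT
  · refine WithBot.add_lt_add_left (degree_ne_bot.2 hm) ?_
    calc (k * derivative X).degree ≤ (derivative X).degree := by
          rw [← nsmul_eq_mul]; exact degree_smul_le _ _
      _ < X.degree := degree_derivative_lt hX
      _ ≤ T.degree := hXT

theorem natDegree_derivNumerator {c0 X T : R[X]} (hc0 : c0 ≠ 0) (hX : X ≠ 0)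
    (hXT : X.degree ≤ T.degree) (k : ℕ) :
    (derivNumerator c0 X T k).natDegree = c0.natDegree + k * T.natDegree ∧
      (derivNumerator c0 X T k).leadingCoeff = c0.leadingCoeff * T.leadingCoeff ^ k := by
  have hT : T ≠ 0 := ne_zero_of_degree_ge_degree hXT hX
  induction k with
  | zero => simp [derivNumerator]
  | succ k ih =>
    set M := derivNumerator c0 X T k
    have hM : M ≠ 0 := leadingCoeff_ne_zero.1 (ih.2 ▸ mul_ne_zero
      (leadingCoeff_ne_zero.2 hc0) (pow_ne_zero _ (leadingCoeff_ne_zero.2 hT)))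
    have hstep : derivNumerator c0 X T (k + 1)
        = M * T + (derivative M * X - M * (k * derivative X)) := by
      simp only [derivNumerator, M]; ring
    have hlt := degree_derivative_mul_sub_lt hM hX hXT k
    rw [hstep, natDegree_add_eq_left_of_degree_lt hlt, leadingCoeff_add_of_degree_lt' hlt,
      natDegree_mul hM hT, leadingCoeff_mul, ih.1, ih.2]
    constructor <;> ring

end DerivNumerator

section Bivariate

variable {K : Type*} [CommRing K]

theorem degY_derivNumerator_le {c0 X T : K[X][X]} {G : ℕ} (hX : degY X ≤ G) (hT : degY T ≤ G)
    (k : ℕ) : degY (derivNumerator c0 X T k) ≤ degY c0 + k * G := by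
  induction k with
  | zero => simp [derivNumerator]
  | succ k ih =>
    refine (degY_add_le _ _).trans (max_le ?_ ?_) <;> refine (degY_mul_le _ _).trans ?_
    · have := degY_derivative_le (derivNumerator c0 X T k)
      rw [add_one_mul]
      linarith
    · have := (degY_sub_le T (k * derivative X)).trans
        (max_le hT ((degY_natCast_mul_le _ _).trans ((degY_derivative_le X).trans hX)))
      rw [add_one_mul]
      linarith

theorem degY_sum_smul_derivative_mul_prod_erase_le {ι : Type*} [Fintype ι] [DecidableEq ι]
    (e : ι → K) (c : ι → K[X][X]) :
    degY (∑ ℓ, e ℓ • (derivative (c ℓ) * ∏ j ∈ univ.erase ℓ, c j)) ≤ ∑ ℓ, degY (c ℓ) := by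
  refine degY_sum_le _ _ fun ℓ _ => (degY_smul_le _ _).trans ((degY_mul_le _ _).trans ?_)
  rw [← add_sum_erase univ _ (mem_univ ℓ)]
  exact add_le_add (degY_derivative_le _) (degY_prod_le _ _)

variable [IsDomain K]

theorem degY_le_of_mul_eq_derivative_mul {b bs w : K[X][X]} (hb : b ≠ 0) (hbs : bs ≠ 0)
    (hw : b * w = derivative b * bs) : degY w ≤ degY bs := by
  by_cases hw0 : w = 0
  · simp [hw0, degY_eq_natDegree_swap]
  have hb' : derivative b ≠ 0 := fun h0 => by simp [h0, hb, hw0] at hw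
  have hdeg := congrArg degY hw
  rw [degY_mul hb hw0, degY_mul hb' hbs] at hdeg
  have := degY_derivative_le b
  omega

theorem degY_derivative_mul_sub_mul_mul_add_le {a b bs w P s : K[X][X]} (hb : b ≠ 0)
    (hbs : bs ≠ 0) (hw : b * w = derivative b * bs) {C : ℕ} (hP : degY P ≤ C)
    (hs : degY s ≤ C) :
    degY ((derivative a * bs - a * w) * P + b * bs * s) ≤ degY bs + max (degY a) (degY b) + C := by
  have hU : degY (derivative a * bs - a * w) ≤ degY a + degY bs :=
    (degY_sub_le _ _).trans (max_le
      ((degY_mul_le _ _).trans (add_le_add (degY_derivative_le a) le_rfl))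
      ((degY_mul_le _ _).trans (add_le_add le_rfl (degY_le_of_mul_eq_derivative_mul hb hbs hw))))
  have := le_max_left (degY a) (degY b)
  have := le_max_right (degY a) (degY b)
  refine (degY_add_le _ _).trans (max_le ?_ ?_)
  · have := degY_mul_le (derivative a * bs - a * w) P
    omega
  · have := degY_mul_le (b * bs) s
    have := degY_mul_le b bs
    omega

theorem exists_iterate_mul_eq_mul {E : Type*} [CommRing E] [IsDomain E] (D : E → E)
    (hD : ∀ u v : E, D (u * v) = D u * v + u * D v) (ι : K[X][X] →+* E)
    (hinj : Function.Injective ι) (hι : ∀ q : K[X][X], D (ι q) = ι (derivative q))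
    {c0 X T : K[X][X]} (hc0 : c0 ≠ 0) (hX : X ≠ 0) (hXT : X.degree ≤ T.degree) {h : E}
    (hh : D h * ι (c0 * X) = h * ι (derivative c0 * X + c0 * T)) {G : ℕ} (hXG : degY X ≤ G)
    (hTG : degY T ≤ G) (i j : ℕ) :
    ∃ N : K[X][X], D^[i] h * ι (c0 * X ^ (i + j)) = ι N * h ∧
      N.natDegree = c0.natDegree + i * T.natDegree + j * X.natDegree ∧
      degY N ≤ degY c0 + (i + j) * G ∧
      N.leadingCoeff = c0.leadingCoeff * T.leadingCoeff ^ i * X.leadingCoeff ^ j := by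
  obtain ⟨hdeg, hlc⟩ := natDegree_derivNumerator hc0 hX hXT i
  have hM : derivNumerator c0 X T i ≠ 0 := leadingCoeff_ne_zero.1 (hlc ▸ mul_ne_zero
    (leadingCoeff_ne_zero.2 hc0) (pow_ne_zero _ (leadingCoeff_ne_zero.2
      (ne_zero_of_degree_ge_degree hXT hX))))
  refine ⟨derivNumerator c0 X T i * X ^ j, ?_, ?_, ?_, ?_⟩
  · have := iterate_mul_eq_derivNumerator_mul D hD ι hι ((map_ne_zero_iff ι hinj).2 hc0) hh i
    simp only [pow_add, ← mul_assoc, map_mul] at this ⊢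
    linear_combination ι (X ^ j) * this
  · rw [natDegree_mul hM (pow_ne_zero _ hX), natDegree_pow, hdeg]
  · calc degY (derivNumerator c0 X T i * X ^ j)
        ≤ (degY c0 + i * G) + j * G := (degY_mul_le _ _).trans (add_le_add
          (degY_derivNumerator_le hXG hTG i) ((degY_pow_le _ _).trans (Nat.mul_le_mul_left j hXG)))
      _ = degY c0 + (i + j) * G := by ring
  · rw [leadingCoeff_mul, leadingCoeff_pow, hlc]

end Bivariate

theorem lemma8_part1_general
    {K : Type*} {E : Type*} [Field K] [CharZero K] [Field E]
    (Dx : E → E)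
    (hDxmul : ∀ u v : E, Dx (u * v) = Dx u * v + u * Dx v)
    (ι : Polynomial (Polynomial K) →+* E)
    (hinj : Function.Injective ι)
    (hDxι : ∀ q : Polynomial (Polynomial K), Dx (ι q) = ι (Polynomial.derivative q))
    (L : ℕ) (a b c0 bs : Polynomial (Polynomial K))
    (c : Fin L → Polynomial (Polynomial K)) (e : Fin L → K)
    (ha : a ≠ 0) (hb : b ≠ 0) (hc0 : c0 ≠ 0) (hc : ∀ ℓ, c ℓ ≠ 0)
    (hbs : Squarefree bs)
    (hbsb : ∀ q : Polynomial (Polynomial K), Prime q → (q ∣ bs ↔ q ∣ b))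
    (h : E)
    (hDxh : Dx h * ι (c0 * b ^ 2 * (∏ ℓ, c ℓ))
      = h * ι (Polynomial.derivative c0 * b ^ 2 * (∏ ℓ, c ℓ)
          + (Polynomial.derivative a * b - a * Polynomial.derivative b) * c0 * (∏ ℓ, c ℓ)
          + c0 * b ^ 2 * ∑ ℓ, e ℓ • (Polynomial.derivative (c ℓ) * ∏ j ∈ Finset.univ.erase ℓ, c j)))
    (hdeg : b.natDegree < a.natDegree)
    (r i : ℕ) (hir : i ≤ r) :
    ∃ N : Polynomial (Polynomial K),
      (Dx^[i] h) * ι (c0 * (b * bs * ∏ ℓ, c ℓ) ^ (r)) = ι N * h ∧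
      (N.natDegree : ℤ)
        = (c0.natDegree : ℤ) + (r : ℤ) * ((bs.natDegree : ℤ) + (b.natDegree : ℤ) + ∑ ℓ, ((c ℓ).natDegree : ℤ)) + (i : ℤ) * ((a.natDegree : ℤ) - (b.natDegree : ℤ) - 1) ∧
      degY N ≤ degY c0 + r * (degY bs + max (degY a) (degY b) + ∑ ℓ, degY (c ℓ)) ∧
      N.leadingCoeff
        = Polynomial.C ((((a.natDegree : ℤ) - (b.natDegree : ℤ) : ℤ) : K) ^ i)
          * (c0.leadingCoeff * a.leadingCoeff ^ i * b.leadingCoeff ^ (r - i)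
            * bs.leadingCoeff ^ r * (∏ ℓ, c ℓ).leadingCoeff ^ r) := by
  obtain ⟨j, rfl⟩ := Nat.exists_eq_add_of_le hir
  have hbs0 := hbs.ne_zero
  have hP : ∏ ℓ, c ℓ ≠ 0 := prod_ne_zero_iff.2 fun ℓ _ => hc ℓ
  obtain ⟨w, hw⟩ := dvd_derivative_mul_of_prime_dvd fun q hq => (hbsb q hq).2
  obtain ⟨hXT, hTdeg, hTlc⟩ := natDegree_derivative_mul_sub_mul_mul_add ha hb hbs0 hP hdeg
    hw.symm (degree_sum_smul_derivative_mul_prod_erase_lt e hc)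
  have hXG : degY (b * bs * ∏ ℓ, c ℓ) ≤ degY bs + max (degY a) (degY b) + ∑ ℓ, degY (c ℓ) :=
    (degY_mul_le _ _).trans (add_le_add ((degY_mul_le b bs).trans (by omega)) (degY_prod_le _ _))
  have hlog := mul_map_eq_of_mul_map_sq_eq ι ((map_ne_zero_iff ι hinj).2 hb) hw.symm hDxh
  have hTG := degY_derivative_mul_sub_mul_mul_add_le (a := a) hb hbs0 hw.symm (degY_prod_le _ _)
    (degY_sum_smul_derivative_mul_prod_erase_le e c)
  obtain ⟨N, hN, hNdeg, hNY, hNlc⟩ := exists_iterate_mul_eq_mul Dx hDxmul ι hinj hDxι hc0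
    (mul_ne_zero (mul_ne_zero hb hbs0) hP) hXT hlog hXG hTG i j
  refine ⟨N, hN, ?_, hNY, ?_⟩
  · rw [natDegree_prod _ _ fun ℓ _ => hc ℓ] at hTdeg
    rw [hNdeg, natDegree_mul (mul_ne_zero hb hbs0) hP, natDegree_mul hb hbs0,
      natDegree_prod _ _ fun ℓ _ => hc ℓ]
    zify at hTdeg
    push_cast
    linear_combination (i : ℤ) * hTdeg
  · rw [hNlc, hTlc, leadingCoeff_mul, leadingCoeff_mul, Nat.add_sub_cancel_left, mul_pow, mul_pow,
      mul_pow]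
    simp only [Int.cast_sub, Int.cast_natCast, map_pow, map_sub, map_natCast]
    ring

theorem lemma8_part1
    {K : Type*} {E : Type*} [Field K] [CharZero K] [Field E]
    (Dx Dy : E → E)
    (hDxadd : ∀ u v : E, Dx (u + v) = Dx u + Dx v)
    (hDxmul : ∀ u v : E, Dx (u * v) = Dx u * v + u * Dx v)
    (hDyadd : ∀ u v : E, Dy (u + v) = Dy u + Dy v)
    (hDymul : ∀ u v : E, Dy (u * v) = Dy u * v + u * Dy v)
    (hcomm : ∀ u : E, Dx (Dy u) = Dy (Dx u))
    (ι : Polynomial (Polynomial K) →+* E)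
    (hinj : Function.Injective ι)
    (hDxι : ∀ q : Polynomial (Polynomial K), Dx (ι q) = ι (Polynomial.derivative q))
    (hDyι : ∀ q : Polynomial (Polynomial K), Dy (ι q) = ι (DY q))
    (L : ℕ) (a b c0 bs : Polynomial (Polynomial K))
    (c : Fin L → Polynomial (Polynomial K)) (e : Fin L → K)
    (ha : a ≠ 0) (hb : b ≠ 0) (hc0 : c0 ≠ 0) (hc : ∀ ℓ, c ℓ ≠ 0)
    (hbs : Squarefree bs)
    (hbsb : ∀ q : Polynomial (Polynomial K), Prime q → (q ∣ bs ↔ q ∣ b))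
    (h : E) (hh : h ≠ 0)
    (hDxh : Dx h * ι (c0 * b ^ 2 * (∏ ℓ, c ℓ))
      = h * ι (Polynomial.derivative c0 * b ^ 2 * (∏ ℓ, c ℓ)
          + (Polynomial.derivative a * b - a * Polynomial.derivative b) * c0 * (∏ ℓ, c ℓ)
          + c0 * b ^ 2 * ∑ ℓ, e ℓ • (Polynomial.derivative (c ℓ) * ∏ j ∈ Finset.univ.erase ℓ, c j)))
    (hDyh : Dy h * ι (c0 * b ^ 2 * (∏ ℓ, c ℓ))
      = h * ι (DY c0 * b ^ 2 * (∏ ℓ, c ℓ)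
          + (DY a * b - a * DY b) * c0 * (∏ ℓ, c ℓ)
          + c0 * b ^ 2 * ∑ ℓ, e ℓ • (DY (c ℓ) * ∏ j ∈ Finset.univ.erase ℓ, c j)))
    (hdeg : b.natDegree < a.natDegree)
    (r i : ℕ) (hir : i ≤ r) :
    ∃ N : Polynomial (Polynomial K),
      (Dx^[i] h) * ι (c0 * (b * bs * ∏ ℓ, c ℓ) ^ (r)) = ι N * h ∧
      (N.natDegree : ℤ)
        = (c0.natDegree : ℤ) + (r : ℤ) * ((bs.natDegree : ℤ) + (b.natDegree : ℤ) + ∑ ℓ, ((c ℓ).natDegree : ℤ)) + (i : ℤ) * ((a.natDegree : ℤ) - (b.natDegree : ℤ) - 1) ∧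
      degY N ≤ degY c0 + r * (degY bs + max (degY a) (degY b) + ∑ ℓ, degY (c ℓ)) ∧
      N.leadingCoeff
        = Polynomial.C ((((a.natDegree : ℤ) - (b.natDegree : ℤ) : ℤ) : K) ^ i)
          * (c0.leadingCoeff * a.leadingCoeff ^ i * b.leadingCoeff ^ (r - i)
            * bs.leadingCoeff ^ r * (∏ ℓ, c ℓ).leadingCoeff ^ r) :=
  lemma8_part1_general Dx hDxmul ι hinj hDxι L a b c0 bs c e ha hb hc0 hc hbs hbsb h hDxh hdeg r i
    hir
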